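/- Every ω-language definable by an LTLEBR formula is definable by a safetyLTL formula: ⟦LTLEBR⟧ ⊆ ⟦safetyLTL⟧. In particular, for every LTLEBR formula χ there is a safetyLTL formula χ′ (obtained by expanding each bounded until ψ₁ U^[a,b] ψ₂ into ⋁_{i=a}^{b}(X^i ψ₂ ∧ ⋀_{j=0}^{i−1} X^j ψ₁)) with L(χ) = L(χ′). -/

import Mathlib

/-- Syntax of LTL with Past (LTL+P) over proposition letters of type `α`. -/
inductive Formula (α : Type) : Type
  | atom  : α → Formula α                       -- proposition letter
  | not   : Formula α → Formula α               -- ¬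
  | or    : Formula α → Formula α → Formula α   -- ∨
  | and   : Formula α → Formula α → Formula α   -- ∧
  | next  : Formula α → Formula α               -- X
  | untl  : Formula α → Formula α → Formula α   -- U
  | rels  : Formula α → Formula α → Formula α   -- R
  | ev    : Formula α → Formula α               -- F
  | glob  : Formula α → Formula α               -- G
  | yest  : Formula α → Formula α               -- Y
  | wyest : Formula α → Formula α               -- Z
  | since : Formula α → Formula α → Formula α   -- S
  | trig  : Formula α → Formula α → Formula α   -- T
  | once  : Formula α → Formula α               -- O
  | hist  : Formula α → Formula α               -- H

namespace Formula

/-- Satisfaction `σ, i ⊨ φ` of an LTL+P formula by a state sequence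
(an infinite word `σ : ℕ → Set α`) at position `i`. -/
def Sat {α : Type} (σ : ℕ → Set α) : Formula α → ℕ → Prop
  | .atom p, i => p ∈ σ i
  | .not φ, i => ¬ Sat σ φ i
  | .or φ ψ, i => Sat σ φ i ∨ Sat σ ψ i
  | .and φ ψ, i => Sat σ φ i ∧ Sat σ ψ i
  | .next φ, i => Sat σ φ (i + 1)
  | .untl φ ψ, i => ∃ j, i ≤ j ∧ Sat σ ψ j ∧ ∀ k, i ≤ k → k < j → Sat σ φ k
  | .rels φ ψ, i => (∀ j, i ≤ j → Sat σ ψ j) ∨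
      (∃ n, i ≤ n ∧ Sat σ φ n ∧ ∀ m, i ≤ m → m ≤ n → Sat σ ψ m)
  | .ev φ, i => ∃ j, i ≤ j ∧ Sat σ φ j
  | .glob φ, i => ∀ j, i ≤ j → Sat σ φ j
  | .yest φ, i => 0 < i ∧ Sat σ φ (i - 1)
  | .wyest φ, i => i = 0 ∨ Sat σ φ (i - 1)
  | .since φ ψ, i => ∃ j, j ≤ i ∧ Sat σ ψ j ∧ ∀ k, j < k → k ≤ i → Sat σ φ k
  | .trig φ ψ, i => (∀ j, j ≤ i → Sat σ ψ j) ∨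
      (∃ n, n ≤ i ∧ Sat σ φ n ∧ ∀ m, n ≤ m → m ≤ i → Sat σ ψ m)
  | .once φ, i => ∃ j, j ≤ i ∧ Sat σ φ j
  | .hist φ, i => ∀ j, j ≤ i → Sat σ φ j

/-- The ω-language of a formula: the set of state sequences satisfying it at position 0. -/
def Lang {α : Type} (φ : Formula α) : Set (ℕ → Set α) := {σ | Sat σ φ 0}

end Formula

open Formula

/-- `σ_{[0,i]} · σ'` : the infinite word whose first `i+1` letters come from `σ`
and which then continues as `σ'`. -/
def extendPrefix {α : Type} (σ : ℕ → Set α) (i : ℕ) (σ' : ℕ → Set α) : ℕ → Set α :=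
  fun n => if n ≤ i then σ n else σ' (n - (i + 1))

/-- `L` is a safety ω-language: every word not in `L` has a finite prefix all of whose
infinite extensions are not in `L`. -/
def IsSafety {α : Type} (L : Set (ℕ → Set α)) : Prop :=
  ∀ σ : ℕ → Set α, σ ∉ L → ∃ i : ℕ, ∀ σ' : ℕ → Set α, extendPrefix σ i σ' ∉ L

/-- `X^n φ`. -/
def nextPow {α : Type} : ℕ → Formula α → Formula α
  | 0, φ => φ
  | n + 1, φ => .next (nextPow n φ)

/-- `⋀_{j=0}^{n} X^j φ`. -/
def nextChain {α : Type} (φ : Formula α) : ℕ → Formula α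
  | 0 => φ
  | n + 1 => .and (nextChain φ n) (nextPow (n + 1) φ)

/-- The `i`-th disjunct of the bounded until: `X^i ψ₂ ∧ ⋀_{j=0}^{i-1} X^j ψ₁`. -/
def buntilTerm {α : Type} (ψ₁ ψ₂ : Formula α) : ℕ → Formula α
  | 0 => ψ₂
  | n + 1 => .and (nextPow (n + 1) ψ₂) (nextChain ψ₁ n)

/-- Bounded until `ψ₁ U^[a,b] ψ₂ = ⋁_{i=a}^{b} (X^i ψ₂ ∧ ⋀_{j=0}^{i-1} X^j ψ₁)`. -/
def buntil {α : Type} (a b : ℕ) (ψ₁ ψ₂ : Formula α) : Formula α :=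
  ((List.range' (a + 1) (b - a)).map (buntilTerm ψ₁ ψ₂)).foldl .or (buntilTerm ψ₁ ψ₂ a)

/-- Pure past layer of LTLEBR+P : `η ::= p | ¬η | η∨η | Yη | ηSη`. -/
inductive PurePastL {α : Type} : Formula α → Prop
  | atom (p : α) : PurePastL (.atom p)
  | not {φ} : PurePastL φ → PurePastL (.not φ)
  | or {φ ψ} : PurePastL φ → PurePastL ψ → PurePastL (.or φ ψ)
  | yest {φ} : PurePastL φ → PurePastL (.yest φ)
  | since {φ ψ} : PurePastL φ → PurePastL ψ → PurePastL (.since φ ψ)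

/-- Bounded future layer over a base: `ψ ::= base | ¬ψ | ψ∨ψ | Xψ | ψ U^[a,b] ψ`. -/
inductive BFLayer {α : Type} (base : Formula α → Prop) : Formula α → Prop
  | base {φ} : base φ → BFLayer base φ
  | not {φ} : BFLayer base φ → BFLayer base (.not φ)
  | or {φ ψ} : BFLayer base φ → BFLayer base ψ → BFLayer base (.or φ ψ)
  | next {φ} : BFLayer base φ → BFLayer base (.next φ)
  | bu (a b : ℕ) {φ ψ} : BFLayer base φ → BFLayer base ψ → BFLayer base (buntil a b φ ψ)

/-- Future layer: `φ ::= ψ | φ∧φ | Xφ | Gφ | ψRφ`. -/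
inductive FLayer {α : Type} (base : Formula α → Prop) : Formula α → Prop
  | bf {φ} : BFLayer base φ → FLayer base φ
  | and {φ ψ} : FLayer base φ → FLayer base ψ → FLayer base (.and φ ψ)
  | next {φ} : FLayer base φ → FLayer base (.next φ)
  | glob {φ} : FLayer base φ → FLayer base (.glob φ)
  | rels {φ ψ} : BFLayer base φ → FLayer base ψ → FLayer base (.rels φ ψ)

/-- Boolean layer: `χ ::= φ | χ∨χ | χ∧χ`. -/
inductive BLayer {α : Type} (base : Formula α → Prop) : Formula α → Prop
  | f {φ} : FLayer base φ → BLayer base φ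
  | or {φ ψ} : BLayer base φ → BLayer base ψ → BLayer base (.or φ ψ)
  | and {φ ψ} : BLayer base φ → BLayer base ψ → BLayer base (.and φ ψ)

/-- LTLEBR+P formulas: layered grammar whose innermost layer is the pure past layer. -/
def IsLTLEBRP {α : Type} (φ : Formula α) : Prop := BLayer PurePastL φ

/-- LTLEBR formulas: LTLEBR+P without the pure past layer
(the bounded future layer starts from proposition letters). -/
def IsLTLEBR {α : Type} (φ : Formula α) : Prop :=
  BLayer (fun ψ => ∃ p, ψ = Formula.atom p) φ

/-- Formulas with no past operators (pure future LTL). -/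
def FutureOnly {α : Type} : Formula α → Prop
  | .atom _ => True
  | .not φ => FutureOnly φ
  | .or φ ψ => FutureOnly φ ∧ FutureOnly ψ
  | .and φ ψ => FutureOnly φ ∧ FutureOnly ψ
  | .next φ => FutureOnly φ
  | .untl φ ψ => FutureOnly φ ∧ FutureOnly ψ
  | .rels φ ψ => FutureOnly φ ∧ FutureOnly ψ
  | .ev φ => FutureOnly φ
  | .glob φ => FutureOnly φ
  | .yest _ => False
  | .wyest _ => False
  | .since _ _ => False
  | .trig _ _ => False
  | .once _ => False
  | .hist _ => False

/-- Negated normal form: `nnf b φ` is the NNF of `φ` if `b = false`, of `¬φ` if `b = true`. -/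
def nnf {α : Type} : Bool → Formula α → Formula α
  | false, .atom p => .atom p
  | true, .atom p => .not (.atom p)
  | b, .not φ => nnf (!b) φ
  | false, .or φ ψ => .or (nnf false φ) (nnf false ψ)
  | true, .or φ ψ => .and (nnf true φ) (nnf true ψ)
  | false, .and φ ψ => .and (nnf false φ) (nnf false ψ)
  | true, .and φ ψ => .or (nnf true φ) (nnf true ψ)
  | b, .next φ => .next (nnf b φ)
  | false, .untl φ ψ => .untl (nnf false φ) (nnf false ψ)
  | true, .untl φ ψ => .rels (nnf true φ) (nnf true ψ)
  | false, .rels φ ψ => .rels (nnf false φ) (nnf false ψ)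
  | true, .rels φ ψ => .untl (nnf true φ) (nnf true ψ)
  | false, .ev φ => .ev (nnf false φ)
  | true, .ev φ => .glob (nnf true φ)
  | false, .glob φ => .glob (nnf false φ)
  | true, .glob φ => .ev (nnf true φ)
  | false, .yest φ => .yest (nnf false φ)
  | true, .yest φ => .wyest (nnf true φ)
  | false, .wyest φ => .wyest (nnf false φ)
  | true, .wyest φ => .yest (nnf true φ)
  | false, .since φ ψ => .since (nnf false φ) (nnf false ψ)
  | true, .since φ ψ => .trig (nnf true φ) (nnf true ψ)
  | false, .trig φ ψ => .trig (nnf false φ) (nnf false ψ)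
  | true, .trig φ ψ => .since (nnf true φ) (nnf true ψ)
  | false, .once φ => .once (nnf false φ)
  | true, .once φ => .hist (nnf true φ)
  | false, .hist φ => .hist (nnf false φ)
  | true, .hist φ => .once (nnf true φ)

/-- The formula contains no until (`U`) and no eventually (`F`) operator. -/
def NoUF {α : Type} : Formula α → Prop
  | .atom _ => True
  | .not φ => NoUF φ
  | .or φ ψ => NoUF φ ∧ NoUF ψ
  | .and φ ψ => NoUF φ ∧ NoUF ψ
  | .next φ => NoUF φ
  | .untl _ _ => False
  | .rels φ ψ => NoUF φ ∧ NoUF ψ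
  | .ev _ => False
  | .glob φ => NoUF φ
  | .yest φ => NoUF φ
  | .wyest φ => NoUF φ
  | .since φ ψ => NoUF φ ∧ NoUF ψ
  | .trig φ ψ => NoUF φ ∧ NoUF ψ
  | .once φ => NoUF φ
  | .hist φ => NoUF φ

/-- safetyLTL: pure-future LTL formulas whose negated normal form
contains no `U` and no `F`. -/
def IsSafetyLTL {α : Type} (φ : Formula α) : Prop :=
  FutureOnly φ ∧ NoUF (nnf false φ)

/-- LTLBP (bounded past LTL): Boolean combinations of proposition letters
and yesterday operators. -/
inductive IsLTLBP {α : Type} : Formula α → Prop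
  | atom (p : α) : IsLTLBP (.atom p)
  | not {φ} : IsLTLBP φ → IsLTLBP (.not φ)
  | or {φ ψ} : IsLTLBP φ → IsLTLBP ψ → IsLTLBP (.or φ ψ)
  | and {φ ψ} : IsLTLBP φ → IsLTLBP ψ → IsLTLBP (.and φ ψ)
  | yest {φ} : IsLTLBP φ → IsLTLBP (.yest φ)

/-- Temporal depth `D` of an LTLBP formula. -/
def depth {α : Type} : Formula α → ℕ
  | .not φ => depth φ
  | .or φ ψ => max (depth φ) (depth ψ)
  | .and φ ψ => max (depth φ) (depth ψ)
  | .yest φ => depth φ + 1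
  | _ => 0

/-- canLTLEBR: the canonical form of LTLEBR, i.e. `∧/∨`-combinations of formulas
`X^n α`, `X^n G α`, `X^n (α R β)` with `α, β` LTLBP formulas. -/
inductive IsCanLTLEBR {α : Type} : Formula α → Prop
  | bp {φ} (n : ℕ) : IsLTLBP φ → IsCanLTLEBR (nextPow n φ)
  | glob {φ} (n : ℕ) : IsLTLBP φ → IsCanLTLEBR (nextPow n (.glob φ))
  | rels {φ ψ} (n : ℕ) : IsLTLBP φ → IsLTLBP ψ → IsCanLTLEBR (nextPow n (.rels φ ψ))
  | and {φ ψ} : IsCanLTLEBR φ → IsCanLTLEBR ψ → IsCanLTLEBR (.and φ ψ)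
  | or {φ ψ} : IsCanLTLEBR φ → IsCanLTLEBR ψ → IsCanLTLEBR (.or φ ψ)

/-- Maximum number of nested next (`X`) operators (for canonical-form formulas). -/
def nextDepth {α : Type} : Formula α → ℕ
  | .next φ => nextDepth φ + 1
  | .not φ => nextDepth φ
  | .or φ ψ => max (nextDepth φ) (nextDepth ψ)
  | .and φ ψ => max (nextDepth φ) (nextDepth ψ)
  | .glob φ => nextDepth φ
  | .rels φ ψ => max (nextDepth φ) (nextDepth ψ)
  | .yest φ => nextDepth φ
  | _ => 0

/-- Maximum temporal depth among LTLBP subformulas (for canonical-form formulas). -/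
def bpDepth {α : Type} : Formula α → ℕ
  | .next φ => bpDepth φ
  | .glob φ => depth φ
  | .rels φ ψ => max (depth φ) (depth ψ)
  | .and φ ψ => max (bpDepth φ) (bpDepth ψ)
  | .or φ ψ => max (bpDepth φ) (bpDepth ψ)
  | φ => depth φ

/-- The interval `σ_{[n-d, n]}` of `σ`, as a finite word: it starts at
`max (n-d) 0` and ends at `n`. -/
def window {α : Type} (σ : ℕ → Set α) (d n : ℕ) : List (Set α) :=
  (List.range (min d n + 1)).map (fun t => σ (n - min d n + t))

/-- A pure past formula: all of its temporal operators are past operators. -/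
def IsPurePast {α : Type} : Formula α → Prop
  | .atom _ => True
  | .not φ => IsPurePast φ
  | .or φ ψ => IsPurePast φ ∧ IsPurePast ψ
  | .and φ ψ => IsPurePast φ ∧ IsPurePast ψ
  | .next _ => False
  | .untl _ _ => False
  | .rels _ _ => False
  | .ev _ => False
  | .glob _ => False
  | .yest φ => IsPurePast φ
  | .wyest φ => IsPurePast φ
  | .since φ ψ => IsPurePast φ ∧ IsPurePast ψ
  | .trig φ ψ => IsPurePast φ ∧ IsPurePast ψ
  | .once φ => IsPurePast φ
  | .hist φ => IsPurePast φ

/-- The two-letter alphabet Σ = {p₁, p₂}. -/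
inductive PP : Type
  | p1 : PP
  | p2 : PP
deriving DecidableEq

/-- The state sequence `^{i,k}σ^j`: its `h`-th state is `{p₁}` if `h ∈ {i,k}`,
`{p₂}` if `h = j`, and `{p₁,p₂}` otherwise. -/
def sig (i k j : ℕ) : ℕ → Set PP := fun h =>
  if h = i ∨ h = k then {PP.p1} else if h = j then {PP.p2} else {PP.p1, PP.p2}

/-- The formula `G (p₁ ∨ G p₂)`. -/
def phiG : Formula PP :=
  .glob (.or (.atom PP.p1) (.glob (.atom PP.p2)))

/-!
Bounded until is itself an abbreviation: `ψ₁ U^[a,b] ψ₂` is a finite disjunction of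
conjunctions of `X^i`-formulas. Hence every formula of the bounded future layer is built from
letters by Boolean connectives and `X` only, so the NNF of the formula and of its negation are
both free of `U` and `F`. Conjunction, `X`, `G` and `ψ R φ` preserve safetyLTL, and so does the
Boolean layer: every LTLEBR formula is already a safetyLTL formula, and one can take `χ' = χ`.
-/

/-- `¬φ` is safetyLTL exactly when `φ` is coSafetyLTL. -/
def IsSafetyCoSafetyLTL {α : Type} (φ : Formula α) : Prop :=
  IsSafetyLTL φ ∧ IsSafetyLTL (.not φ)

namespace IsSafetyLTL

variable {α : Type} {φ ψ : Formula α}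

theorem atom (p : α) : IsSafetyLTL (.atom p) :=
  ⟨trivial, trivial⟩

theorem or (hφ : IsSafetyLTL φ) (hψ : IsSafetyLTL ψ) : IsSafetyLTL (.or φ ψ) :=
  ⟨⟨hφ.1, hψ.1⟩, hφ.2, hψ.2⟩

theorem and (hφ : IsSafetyLTL φ) (hψ : IsSafetyLTL ψ) : IsSafetyLTL (.and φ ψ) :=
  ⟨⟨hφ.1, hψ.1⟩, hφ.2, hψ.2⟩

theorem next (h : IsSafetyLTL φ) : IsSafetyLTL (.next φ) :=
  h

theorem glob (h : IsSafetyLTL φ) : IsSafetyLTL (.glob φ) :=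
  h

theorem rels (hφ : IsSafetyLTL φ) (hψ : IsSafetyLTL ψ) : IsSafetyLTL (.rels φ ψ) :=
  ⟨⟨hφ.1, hψ.1⟩, hφ.2, hψ.2⟩

end IsSafetyLTL

namespace IsSafetyCoSafetyLTL

variable {α : Type} {φ ψ : Formula α}

theorem atom (p : α) : IsSafetyCoSafetyLTL (.atom p) :=
  ⟨IsSafetyLTL.atom p, trivial, trivial⟩

theorem not (h : IsSafetyCoSafetyLTL φ) : IsSafetyCoSafetyLTL (.not φ) :=
  ⟨h.2, h.1⟩

theorem or (hφ : IsSafetyCoSafetyLTL φ) (hψ : IsSafetyCoSafetyLTL ψ) :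
    IsSafetyCoSafetyLTL (.or φ ψ) :=
  ⟨hφ.1.or hψ.1, hφ.2.and hψ.2⟩

theorem and (hφ : IsSafetyCoSafetyLTL φ) (hψ : IsSafetyCoSafetyLTL ψ) :
    IsSafetyCoSafetyLTL (.and φ ψ) :=
  ⟨hφ.1.and hψ.1, hφ.2.or hψ.2⟩

theorem next (h : IsSafetyCoSafetyLTL φ) : IsSafetyCoSafetyLTL (.next φ) :=
  ⟨h.1.next, h.2.next⟩

theorem nextPow (h : IsSafetyCoSafetyLTL φ) (n : ℕ) :
    IsSafetyCoSafetyLTL (_root_.nextPow n φ) := by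
  induction n with
  | zero => exact h
  | succ n ih => exact ih.next

theorem nextChain (h : IsSafetyCoSafetyLTL φ) (n : ℕ) :
    IsSafetyCoSafetyLTL (_root_.nextChain φ n) := by
  induction n with
  | zero => exact h
  | succ n ih => exact ih.and (h.nextPow _)

theorem buntilTerm (hφ : IsSafetyCoSafetyLTL φ) (hψ : IsSafetyCoSafetyLTL ψ) (n : ℕ) :
    IsSafetyCoSafetyLTL (_root_.buntilTerm φ ψ n) := by
  cases n with
  | zero => exact hψ
  | succ n => exact (hψ.nextPow _).and (hφ.nextChain _)

theorem foldl_or {l : List (Formula α)} (hφ : IsSafetyCoSafetyLTL φ)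
    (hl : ∀ ψ ∈ l, IsSafetyCoSafetyLTL ψ) : IsSafetyCoSafetyLTL (l.foldl .or φ) := by
  induction l generalizing φ with
  | nil => exact hφ
  | cons ψ l ih =>
    exact ih (hφ.or (hl ψ List.mem_cons_self)) fun χ hχ => hl χ (List.mem_cons_of_mem ψ hχ)

theorem buntil (a b : ℕ) (hφ : IsSafetyCoSafetyLTL φ) (hψ : IsSafetyCoSafetyLTL ψ) :
    IsSafetyCoSafetyLTL (_root_.buntil a b φ ψ) := by
  refine foldl_or (hφ.buntilTerm hψ a) fun χ hχ => ?_
  obtain ⟨n, -, rfl⟩ := List.mem_map.1 hχ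
  exact hφ.buntilTerm hψ n

end IsSafetyCoSafetyLTL

section Layers

variable {α : Type} {base : Formula α → Prop} {φ : Formula α}

theorem BFLayer.isSafetyCoSafetyLTL (hbase : ∀ ψ, base ψ → IsSafetyCoSafetyLTL ψ)
    (h : BFLayer base φ) : IsSafetyCoSafetyLTL φ := by
  induction h with
  | base hψ => exact hbase _ hψ
  | not _ ih => exact ih.not
  | or _ _ ih₁ ih₂ => exact ih₁.or ih₂
  | next _ ih => exact ih.next
  | bu a b _ _ ih₁ ih₂ => exact ih₁.buntil a b ih₂

theorem FLayer.isSafetyLTL (hbase : ∀ ψ, base ψ → IsSafetyCoSafetyLTL ψ)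
    (h : FLayer base φ) : IsSafetyLTL φ := by
  induction h with
  | bf hψ => exact (hψ.isSafetyCoSafetyLTL hbase).1
  | and _ _ ih₁ ih₂ => exact ih₁.and ih₂
  | next _ ih => exact ih.next
  | glob _ ih => exact ih.glob
  | rels hψ _ ih => exact (hψ.isSafetyCoSafetyLTL hbase).1.rels ih

theorem BLayer.isSafetyLTL (hbase : ∀ ψ, base ψ → IsSafetyCoSafetyLTL ψ)
    (h : BLayer base φ) : IsSafetyLTL φ := by
  induction h with
  | f hψ => exact hψ.isSafetyLTL hbase
  | or _ _ ih₁ ih₂ => exact ih₁.or ih₂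
  | and _ _ ih₁ ih₂ => exact ih₁.and ih₂

end Layers

theorem IsLTLEBR.isSafetyLTL {α : Type} {χ : Formula α} (h : IsLTLEBR χ) : IsSafetyLTL χ :=
  BLayer.isSafetyLTL (by rintro _ ⟨p, rfl⟩; exact .atom p) h

theorem ltlebr_subset_safetyltl_general {α : Type} :
    ({L : Set (ℕ → Set α) | ∃ χ : Formula α, IsLTLEBR χ ∧ Lang χ = L} ⊆
      {L : Set (ℕ → Set α) | ∃ φ : Formula α, IsSafetyLTL φ ∧ Lang φ = L}) ∧
    (∀ χ : Formula α, IsLTLEBR χ →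
      ∃ χ' : Formula α, IsSafetyLTL χ' ∧ Lang χ = Lang χ') := by
  refine ⟨?_, fun χ hχ => ⟨χ, hχ.isSafetyLTL, rfl⟩⟩
  rintro _ ⟨χ, hχ, rfl⟩
  exact ⟨χ, hχ.isSafetyLTL, rfl⟩

/-- `⟦LTLEBR⟧ ⊆ ⟦safetyLTL⟧`; in particular every LTLEBR formula
has an equivalent safetyLTL formula. -/
theorem ltlebr_subset_safetyltl {α : Type} [Fintype α] :
    ({L : Set (ℕ → Set α) | ∃ χ : Formula α, IsLTLEBR χ ∧ Lang χ = L} ⊆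
      {L : Set (ℕ → Set α) | ∃ φ : Formula α, IsSafetyLTL φ ∧ Lang φ = L}) ∧
    (∀ χ : Formula α, IsLTLEBR χ →
      ∃ χ' : Formula α, IsSafetyLTL χ' ∧ Lang χ = Lang χ') :=
  ltlebr_subset_safetyltl_general
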